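/- The multiset A output by the modified greedy algorithm is feasible, and every feasible multiset U (i.e., every multiset with m_U(T_i) ≤ d_i for all i whose load on every object o is at most k_o) satisfies |U| ≤ M·|A|, where |·| denotes total cardinality counted with multiplicities. That is, the modified greedy algorithm, which processes each distinct subtree exactly once regardless of its demand, is an M-approximation for the multiset (demand) version of the problem. -/

import Mathlib

/-!
Demand (multiset) version. `G` is a finite tree rooted at `r`, with `n` *distinct*
subtrees given by their vertex sets `S i` (connected subgraphs of the tree), each
with a positive demand `d i`; the subtrees are indexed so that their roots appear
in nondecreasing order along some post-order traversal (encoded by `pos`). A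
multiset over the subtrees is a multiplicity function `m : Fin n → ℕ`; it is
feasible if `m i ≤ d i` for all `i` and its load on every object is at most the
capacity of that object. The modified greedy algorithm processes each distinct
subtree exactly once, adding it with multiplicity `min (d i) c` where `c` is the
minimum remaining capacity over the objects of the subtree.
-/

open Finset

attribute [local instance] Classical.propDecidable

/-- An *object* of a graph on vertex type `V`: a vertex or a (potential) edge. -/
abbrev Object (V : Type) := V ⊕ Sym2 V

/-- The subtree of `G` with vertex set `s` contains the object `o`. -/
def ContainsObj {V : Type} (G : SimpleGraph V) (s : Finset V) : Object V → Prop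
  | Sum.inl v => v ∈ s
  | Sum.inr e => e ∈ G.edgeSet ∧ ∀ x ∈ e, x ∈ s

/-- The load induced by the multiset with multiplicities `m` on the object `o`. -/
noncomputable def mload {V : Type} [Fintype V] {n : ℕ} (G : SimpleGraph V)
    (S : Fin n → Finset V) (m : Fin n → ℕ) (o : Object V) : ℕ :=
  ∑ i ∈ univ.filter (fun i => ContainsObj G (S i) o), m i

/-- A multiset with multiplicities `m` is feasible if `m i ≤ d i` for every `i`
and no object is overloaded. -/
def FeasibleM {V : Type} [Fintype V] {n : ℕ} (G : SimpleGraph V)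
    (S : Fin n → Finset V) (k : Object V → ℕ) (d : Fin n → ℕ) (m : Fin n → ℕ) : Prop :=
  (∀ i, m i ≤ d i) ∧ ∀ o : Object V, mload G S m o ≤ k o

/-- The modified greedy algorithm: each distinct subtree is processed exactly once
(in the given bottom-up order); when `T_i` is processed, it is added with
multiplicity `min (d i) c`, where `c` is the minimum of `k o - (current load on o)`
over all objects `o` of `T_i`. -/
noncomputable def greedyM {V : Type} [Fintype V] [DecidableEq V] {n : ℕ}
    (G : SimpleGraph V) (S : Fin n → Finset V) (k : Object V → ℕ) (d : Fin n → ℕ) :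
    ℕ → Fin n → ℕ
  | 0 => fun _ => 0
  | t + 1 =>
    if h : t < n then
      let i : Fin n := ⟨t, h⟩
      let prev := greedyM G S k d t
      let objs : Finset (Object V) := univ.filter fun o => ContainsObj G (S i) o
      let c : ℕ :=
        if hne : objs.Nonempty then objs.inf' hne fun o => k o - mload G S prev o
        else 0
      Function.update prev i (min (d i) c)
    else greedyM G S k d t

/-- `v` is an ancestor of `u` in the tree `G` rooted at `r`. -/
def IsAnc {V : Type} (G : SimpleGraph V) (r v u : V) : Prop :=
  G.dist r u = G.dist r v + G.dist v u

/-- The number of leaves of the subtree with vertex set `s` that differ from its root `rt`. -/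
noncomputable def leavesCnt {V : Type} [DecidableEq V] (G : SimpleGraph V)
    (s : Finset V) (rt : V) : ℕ :=
  (s.filter fun v => v ≠ rt ∧ (s.filter fun u => G.Adj v u).card ≤ 1).card

/-!
Follow the algorithm step by step, keeping a multiset that is feasible for the capacities the
algorithm has left and uses only subtrees not yet processed. When `T i` is added with
multiplicity `a`, its objects split into at most `M` chains, one per leaf below their lowest
vertex; since the roots come in post-order, the objects of one chain are nested with respect to
the later subtrees containing them. Removing `a` units per chain, always from the innermost
positive set, lowers the load on every object of `T i` by `a` at a cost of at most `M * a`, and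
no copy of `T i` survives: either `a = d i`, or `T i` saturates one of its objects.
-/

section ChainDecrease

variable {ι : Type*} [Fintype ι] [DecidableEq ι] {𝒞 : Set (Finset ι)}

theorem IsChain.exists_unit_decrease (h𝒞 : IsChain (· ⊆ ·) 𝒞) (m : ι → ℕ) :
    ∃ m' ≤ m, ∑ i, m i ≤ ∑ i, m' i + 1 ∧ ∀ J ∈ 𝒞, ∑ j ∈ J, m' j ≤ ∑ j ∈ J, m j - 1 := by
  by_cases hpos : ∃ J ∈ 𝒞, ∑ j ∈ J, m j ≠ 0
  swap
  · push Not at hpos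
    exact ⟨m, le_rfl, by omega, fun J hJ => by simp [hpos J hJ]⟩
  -- Removing one unit from the smallest positive member of the chain lowers every positive one.
  obtain ⟨J₀, ⟨hJ₀, hJ₀pos⟩, hmin⟩ := Set.exists_min_image {J | J ∈ 𝒞 ∧ ∑ j ∈ J, m j ≠ 0}
    Finset.card (Set.toFinite _) hpos
  obtain ⟨j₀, hj₀, hmj₀⟩ := Finset.exists_ne_zero_of_sum_ne_zero hJ₀pos
  have hsub : ∀ J ∈ 𝒞, ∑ j ∈ J, m j ≠ 0 → j₀ ∈ J := by
    intro J hJ hJpos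
    rcases h𝒞.total hJ₀ hJ with h | h
    · exact h hj₀
    · rw [Finset.eq_of_subset_of_card_le h (hmin J ⟨hJ, hJpos⟩)]
      exact hj₀
  set m' := m - Pi.single j₀ 1
  have hm : m = m' + Pi.single j₀ 1 := by
    funext j
    by_cases hj : j = j₀
    · subst hj; simp [m']; omega
    · simp [m', hj]
  have hsum : ∀ J : Finset ι, ∑ j ∈ J, m j = ∑ j ∈ J, m' j + if j₀ ∈ J then 1 else 0 := by
    intro J
    conv_lhs => rw [hm]
    rw [← Finset.sum_pi_single' j₀ 1 J, ← Finset.sum_add_distrib]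
    rfl
  refine ⟨m', fun j => by rw [hm]; simp, ?_, fun J hJ => ?_⟩
  · have := hsum univ
    simp only [Finset.mem_univ, if_true] at this
    omega
  · have := hsum J
    by_cases hJpos : ∑ j ∈ J, m j = 0
    · omega
    · rw [if_pos (hsub J hJ hJpos)] at this
      omega

theorem IsChain.exists_decrease (h𝒞 : IsChain (· ⊆ ·) 𝒞) (m : ι → ℕ) (a : ℕ) :
    ∃ m' ≤ m, ∑ i, m i ≤ ∑ i, m' i + a ∧ ∀ J ∈ 𝒞, ∑ j ∈ J, m' j ≤ ∑ j ∈ J, m j - a := by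
  induction a with
  | zero => exact ⟨m, le_rfl, le_rfl, fun _ _ => le_rfl⟩
  | succ a ih =>
    obtain ⟨m₁, hm₁, hsum₁, hJ₁⟩ := ih
    obtain ⟨m₂, hm₂, hsum₂, hJ₂⟩ := h𝒞.exists_unit_decrease m₁
    refine ⟨m₂, hm₂.trans hm₁, by omega, fun J hJ => ?_⟩
    have := hJ₁ J hJ
    have := hJ₂ J hJ
    omega

theorem exists_decrease_of_forall_isChain {κ : Type*} (L : Finset κ) (𝒞 : κ → Set (Finset ι))
    (h𝒞 : ∀ ℓ ∈ L, IsChain (· ⊆ ·) (𝒞 ℓ)) (m : ι → ℕ) (a : ℕ) :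
    ∃ m' ≤ m, ∑ i, m i ≤ ∑ i, m' i + #L * a ∧
      ∀ ℓ ∈ L, ∀ J ∈ 𝒞 ℓ, ∑ j ∈ J, m' j ≤ ∑ j ∈ J, m j - a := by
  classical
  induction L using Finset.induction_on with
  | empty => exact ⟨m, le_rfl, by simp, by simp⟩
  | insert ℓ L hℓ ih =>
    obtain ⟨m₁, hm₁, hsum₁, hJ₁⟩ := ih fun ℓ' hℓ' => h𝒞 ℓ' (Finset.mem_insert_of_mem hℓ')
    obtain ⟨m₂, hm₂, hsum₂, hJ₂⟩ := (h𝒞 ℓ (Finset.mem_insert_self ℓ L)).exists_decrease m₁ a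
    have hmono : ∀ J : Finset ι, ∑ j ∈ J, m₂ j ≤ ∑ j ∈ J, m₁ j ∧ ∑ j ∈ J, m₁ j ≤ ∑ j ∈ J, m j :=
      fun J => ⟨Finset.sum_le_sum fun j _ => hm₂ j, Finset.sum_le_sum fun j _ => hm₁ j⟩
    refine ⟨m₂, hm₂.trans hm₁, ?_, fun ℓ' hℓ' J hJ => ?_⟩
    · rw [Finset.card_insert_of_notMem hℓ, add_mul]
      omega
    · rcases Finset.mem_insert.mp hℓ' with rfl | hℓ'
      · have := hJ₂ J hJ
        have := hmono J
        omega
      · have := hJ₁ ℓ' hℓ' J hJ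
        have := hmono J
        omega

end ChainDecrease

section Greedy

variable {V : Type} [Fintype V] {n : ℕ}
  (G : SimpleGraph V) (S : Fin n → Finset V) (k : Object V → ℕ) (d : Fin n → ℕ)

noncomputable def spare (m : Fin n → ℕ) (i : Fin n) : ℕ :=
  if hne : (univ.filter fun o => ContainsObj G (S i) o).Nonempty then
    (univ.filter fun o => ContainsObj G (S i) o).inf' hne fun o => k o - mload G S m o
  else 0

noncomputable def usersFrom (i : Fin n) (o : Object V) : Finset (Fin n) :=
  univ.filter fun j => i ≤ j ∧ ContainsObj G (S j) o

variable {G S k d}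

lemma spare_le {m : Fin n → ℕ} {i : Fin n} {o : Object V} (ho : ContainsObj G (S i) o) :
    spare G S k m i ≤ k o - mload G S m o := by
  have hmem : o ∈ univ.filter fun o => ContainsObj G (S i) o := by simpa using ho
  rw [spare, dif_pos ⟨o, hmem⟩]
  exact Finset.inf'_le _ hmem

lemma exists_spare_eq {m : Fin n → ℕ} {i : Fin n} (h : ∃ o, ContainsObj G (S i) o) :
    ∃ o, ContainsObj G (S i) o ∧ spare G S k m i = k o - mload G S m o := by
  obtain ⟨o₀, ho₀⟩ := h
  have hne : (univ.filter fun o => ContainsObj G (S i) o).Nonempty := ⟨o₀, by simpa using ho₀⟩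
  obtain ⟨o, ho, heq⟩ := Finset.exists_mem_eq_inf' hne fun o => k o - mload G S m o
  exact ⟨o, by simpa using ho, by rw [spare, dif_pos hne, heq]⟩

lemma mload_add (m₁ m₂ : Fin n → ℕ) (o : Object V) :
    mload G S (m₁ + m₂) o = mload G S m₁ o + mload G S m₂ o :=
  Finset.sum_add_distrib

lemma mload_single (i : Fin n) (a : ℕ) (o : Object V) :
    mload G S (Pi.single i a) o = if ContainsObj G (S i) o then a else 0 := by
  simp [mload, Finset.sum_pi_single']

lemma mload_mono {m₁ m₂ : Fin n → ℕ} (h : m₁ ≤ m₂) (o : Object V) :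
    mload G S m₁ o ≤ mload G S m₂ o :=
  Finset.sum_le_sum fun j _ => h j

lemma le_mload {m : Fin n → ℕ} {i : Fin n} {o : Object V} (ho : ContainsObj G (S i) o) :
    m i ≤ mload G S m o :=
  Finset.single_le_sum (fun _ _ => Nat.zero_le _) (by simpa using ho)

lemma mload_eq_sum_usersFrom {m : Fin n → ℕ} {i : Fin n} (hm : ∀ j < i, m j = 0)
    (o : Object V) : mload G S m o = ∑ j ∈ usersFrom G S i o, m j := by
  refine (Finset.sum_subset (fun j hj => ?_) fun j hj hj' => ?_).symm
  · simp only [usersFrom, Finset.mem_filter] at hj ⊢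
    exact ⟨hj.1, hj.2.2⟩
  · simp only [usersFrom, Finset.mem_filter, not_and] at hj hj'
    exact hm j (not_le.mp fun hij => hj' hj.1 hij hj.2)

variable [DecidableEq V]

lemma greedyM_apply (t : ℕ) (j : Fin n) :
    greedyM G S k d t j =
      if j.val < t then min (d j) (spare G S k (greedyM G S k d j.val) j) else 0 := by
  induction t with
  | zero => rfl
  | succ t ih =>
    by_cases ht : t < n
    · rw [greedyM, dif_pos ht]
      by_cases hj : j = ⟨t, ht⟩
      · subst hj
        simp [spare]
      · have hjt : j.val ≠ t := fun h => hj (Fin.ext h)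
        simp only [Function.update_of_ne hj, ih]
        congr 1
        simp only [eq_iff_iff]
        omega
    · rw [greedyM, dif_neg ht, ih]
      have := j.isLt
      simp only [show j.val < t by omega, show j.val < t + 1 by omega, if_true]

lemma greedyM_zero : greedyM G S k d 0 = 0 := rfl

lemma greedyM_eq (i : Fin n) :
    greedyM G S k d n i = min (d i) (spare G S k (greedyM G S k d i.val) i) := by
  rw [greedyM_apply, if_pos i.isLt]

lemma greedyM_succ (i : Fin n) :
    greedyM G S k d (i.val + 1) = greedyM G S k d i.val + Pi.single i (greedyM G S k d n i) := by
  funext j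
  simp only [Pi.add_apply, greedyM_apply, Pi.single_apply]
  by_cases hj : j = i
  · subst hj; simp
  · have : j.val ≠ i.val := fun h => hj (Fin.ext h)
    simp only [hj, if_false, add_zero]
    congr 1
    simp only [eq_iff_iff]
    omega

lemma mload_greedyM_succ (i : Fin n) (o : Object V) :
    mload G S (greedyM G S k d (i.val + 1)) o = mload G S (greedyM G S k d i.val) o +
      if ContainsObj G (S i) o then greedyM G S k d n i else 0 := by
  rw [greedyM_succ, mload_add, mload_single]

lemma greedyM_le_spare (i : Fin n) :
    greedyM G S k d n i ≤ spare G S k (greedyM G S k d i.val) i := by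
  rw [greedyM_eq]; exact min_le_right _ _

lemma mload_greedyM_le (t : ℕ) (ht : t ≤ n) (o : Object V) :
    mload G S (greedyM G S k d t) o ≤ k o := by
  induction t with
  | zero => simp [greedyM_zero, mload]
  | succ t ih =>
    have hslack : mload G S (greedyM G S k d (⟨t, ht⟩ : Fin n).val) o ≤ k o := ih (by omega)
    rw [mload_greedyM_succ ⟨t, ht⟩]
    split_ifs with ho
    · have := (greedyM_le_spare (d := d) ⟨t, ht⟩).trans (spare_le (k := k) ho)
      omega
    · simpa using hslack

theorem feasibleM_greedyM : FeasibleM G S k d (greedyM G S k d n) :=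
  ⟨fun i => by rw [greedyM_eq]; exact min_le_left _ _, mload_greedyM_le n le_rfl⟩

/-- Either `T i` got its full demand, or it saturated one of its objects. -/
lemma apply_eq_zero_of_residual {i : Fin n} (hobj : ∃ o, ContainsObj G (S i) o)
    {m : Fin n → ℕ} (hmi : m i ≤ d i - greedyM G S k d n i)
    (hres : ∀ o, mload G S m o + mload G S (greedyM G S k d (i.val + 1)) o ≤ k o) : m i = 0 := by
  rcases le_or_gt (d i) (spare G S k (greedyM G S k d i.val) i) with hdi | hdi
  · rw [greedyM_eq, min_eq_left hdi] at hmi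
    omega
  · obtain ⟨o, ho, hspare⟩ := exists_spare_eq (k := k) (m := greedyM G S k d i.val) hobj
    have hA : greedyM G S k d n i = k o - mload G S (greedyM G S k d i.val) o := by
      rw [greedyM_eq, min_eq_right hdi.le, hspare]
    have hsat := hres o
    rw [mload_greedyM_succ, if_pos ho] at hsat
    have := mload_greedyM_le (G := G) (S := S) (k := k) (d := d) i.val i.isLt.le o
    have := le_mload (m := m) ho
    omega

end Greedy

section ChainCoverBound

variable {V : Type} {n : ℕ} {G : SimpleGraph V} {S : Fin n → Finset V}

/-- For the tree, `L` is the set of leaves of `T i` and `above o ℓ` says that the lowest vertex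
of `o` is an ancestor of `ℓ`. -/
structure ChainCover (G : SimpleGraph V) (S : Fin n → Finset V) (i : Fin n) (L : Finset V)
    (above : Object V → V → Prop) : Prop where
  exists_obj : ∃ o, ContainsObj G (S i) o
  exists_above : ∀ o, ContainsObj G (S i) o → ∃ ℓ ∈ L, above o ℓ
  nested : ∀ ℓ o₁ o₂, ContainsObj G (S i) o₁ → ContainsObj G (S i) o₂ → above o₁ ℓ →
    above o₂ ℓ → usersFrom G S i o₁ ⊆ usersFrom G S i o₂ ∨ usersFrom G S i o₂ ⊆ usersFrom G S i o₁

lemma ChainCover.isChain {i : Fin n} {L : Finset V} {above : Object V → V → Prop}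
    (hcov : ChainCover G S i L above) (ℓ : V) :
    IsChain (· ⊆ ·) (insert {i}
      {J | ∃ o, ContainsObj G (S i) o ∧ above o ℓ ∧ usersFrom G S i o = J}) := by
  refine IsChain.insert ?_ ?_
  · rintro _ ⟨o₁, ho₁, hℓ₁, rfl⟩ _ ⟨o₂, ho₂, hℓ₂, rfl⟩ -
    exact hcov.nested ℓ o₁ o₂ ho₁ ho₂ hℓ₁ hℓ₂
  · rintro _ ⟨o, ho, -, rfl⟩ -
    left
    simpa [usersFrom] using ho

variable [Fintype V] [DecidableEq V] {k : Object V → ℕ} {d : Fin n → ℕ}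

lemma exists_residual_succ {i : Fin n} {L : Finset V} {above : Object V → V → Prop} {M : ℕ}
    (hcov : ChainCover G S i L above) (hLM : #L ≤ M) {m : Fin n → ℕ} (hmd : m ≤ d)
    (hm0 : ∀ j < i, m j = 0)
    (hres : ∀ o, mload G S m o + mload G S (greedyM G S k d i.val) o ≤ k o) :
    ∃ m' ≤ m, ∑ j, m j ≤ ∑ j, m' j + M * greedyM G S k d n i ∧ (∀ j ≤ i, m' j = 0) ∧
      ∀ o, mload G S m' o + mload G S (greedyM G S k d (i.val + 1)) o ≤ k o := by
  set A := greedyM G S k d n i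
  obtain ⟨m', hm'm, hsum, hdec⟩ := exists_decrease_of_forall_isChain L _
    (fun ℓ _ => hcov.isChain ℓ) m A
  have hm'0 : ∀ j < i, m' j = 0 := fun j hj => Nat.eq_zero_of_le_zero (hm0 j hj ▸ hm'm j)
  obtain ⟨o₀, ho₀⟩ := hcov.exists_obj
  obtain ⟨ℓ₀, hℓ₀, -⟩ := hcov.exists_above o₀ ho₀
  -- `{i}` belongs to every chain, so at least `A` copies of `T i` are removed.
  have hm'i : m' i ≤ m i - A := by
    simpa using hdec ℓ₀ hℓ₀ {i} (Set.mem_insert _ _)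
  have hload : ∀ o, ContainsObj G (S i) o → mload G S m' o ≤ mload G S m o - A := by
    intro o ho
    obtain ⟨ℓ, hℓ, hab⟩ := hcov.exists_above o ho
    rw [mload_eq_sum_usersFrom hm'0, mload_eq_sum_usersFrom hm0]
    exact hdec ℓ hℓ _ (Set.mem_insert_of_mem _ ⟨o, ho, hab, rfl⟩)
  have hres' : ∀ o, mload G S m' o + mload G S (greedyM G S k d (i.val + 1)) o ≤ k o := by
    intro o
    have := hres o
    rw [mload_greedyM_succ]
    split_ifs with ho
    · have := hload o ho
      have := (greedyM_le_spare (d := d) i).trans (spare_le (k := k) ho)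
      omega
    · have := mload_mono (G := G) (S := S) hm'm o
      omega
  refine ⟨m', hm'm, by have := Nat.mul_le_mul_right A hLM; omega, fun j hj => ?_, hres'⟩
  rcases hj.lt_or_eq with hj | rfl
  · exact hm'0 j hj
  · have hmdj : m j ≤ d j := hmd j
    exact apply_eq_zero_of_residual hcov.exists_obj (by omega) hres'

theorem sum_le_mul_sum_greedyM_of_chainCover {M : ℕ}
    (hcover : ∀ i, ∃ L above, ChainCover G S i L above ∧ #L ≤ M) {m : Fin n → ℕ}
    (hm : FeasibleM G S k d m) : ∑ j, m j ≤ M * ∑ j, greedyM G S k d n j := by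
  suffices key : ∀ t ≤ n, ∀ m ≤ d, (∀ j : Fin n, j.val < t → m j = 0) →
      (∀ o, mload G S m o + mload G S (greedyM G S k d t) o ≤ k o) →
      ∑ j, m j + M * ∑ j, greedyM G S k d t j ≤ M * ∑ j, greedyM G S k d n j by
    simpa [greedyM_zero] using
      key 0 (Nat.zero_le n) m hm.1 (by simp) (by simpa [greedyM_zero, mload] using hm.2)
  intro t ht
  induction ht using Nat.decreasingInduction with
  | self =>
    intro m _ hm0 _
    simp [fun j : Fin n => hm0 j j.isLt]
  | of_succ t ht ih =>
    intro m hmd hm0 hres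
    obtain ⟨L, above, hcov, hLM⟩ := hcover ⟨t, ht⟩
    obtain ⟨m', hm'm, hsum, hm'0, hres'⟩ := exists_residual_succ hcov hLM hmd hm0 hres
    have := ih m' (hm'm.trans hmd) (fun j hj => hm'0 j (Nat.lt_succ_iff.mp hj)) hres'
    rw [greedyM_succ ⟨t, ht⟩] at this
    simp only [Pi.add_apply, Finset.sum_add_distrib, Finset.sum_pi_single', Finset.mem_univ,
      if_true, mul_add] at this
    omega

end ChainCoverBound

section Tree

open SimpleGraph

variable {V : Type} {G : SimpleGraph V}

lemma SimpleGraph.IsAcyclic.length_eq_dist (hG : G.IsAcyclic) {u v : V} {p : G.Walk u v}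
    (hp : p.IsPath) : p.length = G.dist u v := by
  obtain ⟨q, hq, hlen⟩ := p.reachable.exists_path_of_dist
  rw [← hlen]
  exact congrArg (fun q : G.Path u v => q.1.length)
    ((hG.subsingleton_path u v).elim ⟨p, hp⟩ ⟨q, hq⟩)

lemma SimpleGraph.IsAcyclic.dist_add_dist_of_mem_support (hG : G.IsAcyclic) {u v x : V}
    {p : G.Walk u v} (hp : p.IsPath) (hx : x ∈ p.support) :
    G.dist u x + G.dist x v = G.dist u v := by
  classical
  rw [← hG.length_eq_dist (hp.takeUntil hx), ← hG.length_eq_dist (hp.dropUntil hx),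
    ← hG.length_eq_dist hp, ← Walk.length_append, p.take_spec hx]

lemma SimpleGraph.IsTree.mem_support_of_dist_add_dist (hG : G.IsTree) {u v x : V}
    {p : G.Walk u v} (hp : p.IsPath) (h : G.dist u x + G.dist x v = G.dist u v) :
    x ∈ p.support := by
  obtain ⟨p₁, hp₁⟩ := hG.connected.exists_walk_length_eq_dist u x
  obtain ⟨p₂, hp₂⟩ := hG.connected.exists_walk_length_eq_dist x v
  have hq : (p₁.append p₂).IsPath :=
    Walk.isPath_of_length_eq_dist _ (by rw [Walk.length_append]; omega)
  have : p = p₁.append p₂ :=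
    congrArg Subtype.val ((hG.isAcyclic.subsingleton_path u v).elim ⟨p, hp⟩ ⟨_, hq⟩)
  rw [this, Walk.mem_support_append_iff]
  exact Or.inl p₁.end_mem_support

lemma SimpleGraph.IsTree.dist_eq_add_one_of_adj (hG : G.IsTree) (r : V) {u v : V}
    (h : G.Adj u v) : G.dist r v = G.dist r u + 1 ∨ G.dist r u = G.dist r v + 1 := by
  obtain ⟨p, hp, hpl⟩ := hG.connected.exists_path_of_dist r u
  obtain ⟨q, hq, hql⟩ := hG.connected.exists_path_of_dist r v
  by_cases hu : u ∈ q.support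
  · left
    rw [hG.isAcyclic.path_concat hp hq h hu, Walk.length_concat] at hql
    omega
  · right
    have hv := hG.isAcyclic.mem_support_of_ne_mem_support_of_adj_of_isPath hp hq h hu
    rw [hG.isAcyclic.path_concat hq hp h.symm hv, Walk.length_concat] at hpl
    omega

lemma exists_walk_support_subset {s : Set V} (hs : (G.induce s).Connected) {u v : V}
    (hu : u ∈ s) (hv : v ∈ s) : ∃ p : G.Walk u v, ∀ y ∈ p.support, y ∈ s := by
  obtain ⟨p⟩ := hs ⟨u, hu⟩ ⟨v, hv⟩
  refine ⟨p.map (Embedding.induce s).toHom, fun y hy => ?_⟩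
  obtain ⟨z, -, rfl⟩ := List.mem_map.mp ((Walk.support_map _ p) ▸ hy)
  exact z.2

variable {r a b c w : V}

lemma isAnc_refl (v : V) : IsAnc G r v v := by
  simp [IsAnc]

lemma IsAnc.trans (hG : G.Connected) (h₁ : IsAnc G r a b) (h₂ : IsAnc G r b c) :
    IsAnc G r a c := by
  have : G.dist a c ≤ G.dist a b + G.dist b c := hG.dist_triangle
  have : G.dist r c ≤ G.dist r a + G.dist a c := hG.dist_triangle
  unfold IsAnc at *
  omega

lemma IsAnc.eq_of_dist_le (hG : G.Connected) (h : IsAnc G r a b)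
    (hd : G.dist r b ≤ G.dist r a) : a = b :=
  hG.dist_eq_zero_iff.mp (by unfold IsAnc at h; omega)

lemma SimpleGraph.IsTree.isAnc_of_adj (hG : G.IsTree) (h : G.Adj a b)
    (hd : G.dist r a ≤ G.dist r b) : IsAnc G r a b := by
  have : G.dist a b = 1 := dist_eq_one_iff_adj.mpr h
  have := hG.dist_eq_add_one_of_adj r h
  unfold IsAnc
  omega

lemma IsAnc.total (hG : G.IsTree) (ha : IsAnc G r a w) (hb : IsAnc G r b w) :
    IsAnc G r a b ∨ IsAnc G r b a := by
  classical
  -- `a` and `b` both lie on the path from `r` to `w`.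
  obtain ⟨p, hp, -⟩ := hG.connected.exists_path_of_dist r w
  have hbp : b ∈ p.support := hG.mem_support_of_dist_add_dist hp hb.symm
  have hap : a ∈ p.support := hG.mem_support_of_dist_add_dist hp ha.symm
  rw [← p.take_spec hbp, Walk.mem_support_append_iff] at hap
  rcases hap with hap | hap
  · exact Or.inl (hG.isAcyclic.dist_add_dist_of_mem_support (hp.takeUntil hbp) hap).symm
  · have := hG.isAcyclic.dist_add_dist_of_mem_support (hp.dropUntil hbp) hap
    unfold IsAnc at *
    right
    omega

lemma IsAnc.of_dist_le (hG : G.IsTree) (ha : IsAnc G r a w) (hb : IsAnc G r b w)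
    (hd : G.dist r a ≤ G.dist r b) : IsAnc G r a b := by
  rcases ha.total hG hb with h | h
  · exact h
  · rw [h.eq_of_dist_le hG.connected hd]
    exact isAnc_refl a

lemma IsAnc.of_pos_le (hG : G.IsTree) {pos : V → ℕ} (hpos : Function.Injective pos)
    (hpost : ∀ u v : V, IsAnc G r v u → pos u ≤ pos v) (ha : IsAnc G r a w)
    (hb : IsAnc G r b w) (h : pos b ≤ pos a) : IsAnc G r a b := by
  rcases ha.total hG hb with h' | h'
  · exact h'
  · rw [hpos (le_antisymm (hpost a b h') h)]
    exact isAnc_refl b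

lemma mem_of_isAnc_of_isAnc (hG : G.IsTree) {s : Set V} (hs : (G.induce s).Connected)
    (ha : a ∈ s) (hc : c ∈ s) (h₁ : IsAnc G r a b) (h₂ : IsAnc G r b c) : b ∈ s := by
  classical
  obtain ⟨p, hp⟩ := exists_walk_support_subset hs ha hc
  have hdist : G.dist a b + G.dist b c = G.dist a c := by
    have := h₁.trans hG.connected h₂
    unfold IsAnc at *
    omega
  exact hp b (p.support_bypass_subset_support
    (hG.mem_support_of_dist_add_dist p.bypass_isPath hdist))

lemma isAnc_of_mem (hG : G.IsTree) {s : Set V} (hs : (G.induce s).Connected) {rt : V}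
    (hrt : rt ∈ s) (hmin : ∀ v ∈ s, G.dist r rt ≤ G.dist r v) {v : V} (hv : v ∈ s) :
    IsAnc G r rt v := by
  obtain ⟨p, hp⟩ := exists_walk_support_subset hs hrt hv
  suffices key : ∀ {a b} (p : G.Walk a b), (∀ y ∈ p.support, y ∈ s) →
      IsAnc G r rt a → IsAnc G r rt b from key p hp (isAnc_refl rt)
  intro a b p
  induction p with
  | nil => exact fun _ h => h
  | @cons a c b hac p ih =>
    intro hsupp ha
    refine ih (fun y hy => hsupp y (List.mem_cons_of_mem _ hy)) ?_
    rcases le_total (G.dist r a) (G.dist r c) with hd | hd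
    · exact ha.trans hG.connected (hG.isAnc_of_adj hac hd)
    · rcases ha.total hG (hG.isAnc_of_adj hac.symm hd) with h | h
      · exact h
      · rw [h.eq_of_dist_le hG.connected (hmin c (hsupp c (by simp)))]
        exact isAnc_refl rt

lemma exists_leaf_isAnc [DecidableEq V] (hG : G.IsTree) {s : Finset V}
    (hs : (G.induce (s : Set V)).Connected) {rt : V} (hrt : rt ∈ s)
    (hmin : ∀ v ∈ s, G.dist r rt ≤ G.dist r v) (hne : ∃ z ∈ s, z ≠ rt) {v : V} (hv : v ∈ s) :
    ∃ ℓ ∈ s.filter (fun x => x ≠ rt ∧ (s.filter fun u => G.Adj x u).card ≤ 1),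
      IsAnc G r v ℓ := by
  -- a deepest descendant of `v` in `s`
  obtain ⟨ℓ, hℓD, hmax⟩ := (s.filter (IsAnc G r v)).exists_max_image (G.dist r)
    ⟨v, Finset.mem_filter.mpr ⟨hv, isAnc_refl v⟩⟩
  obtain ⟨hℓ, hvℓ⟩ := Finset.mem_filter.mp hℓD
  have hparent : ∀ u ∈ s, G.Adj ℓ u → IsAnc G r u ℓ := by
    intro u hu hadj
    rcases le_total (G.dist r ℓ) (G.dist r u) with hd | hd
    · have hℓu := hG.isAnc_of_adj hadj hd
      have := hmax u (Finset.mem_filter.mpr ⟨hu, hvℓ.trans hG.connected hℓu⟩)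
      exact absurd (hℓu.eq_of_dist_le hG.connected this) hadj.ne
    · exact hG.isAnc_of_adj hadj.symm hd
  refine ⟨ℓ, Finset.mem_filter.mpr ⟨hℓ, ?_, ?_⟩, hvℓ⟩
  · rintro rfl
    obtain ⟨z, hz, hzne⟩ := hne
    have hℓz : IsAnc G r ℓ z := isAnc_of_mem hG hs hrt hmin hz
    exact hzne (hℓz.eq_of_dist_le hG.connected
      (hmax z (Finset.mem_filter.mpr ⟨hz, hvℓ.trans hG.connected hℓz⟩))).symm
  · refine Finset.card_le_one.mpr fun a ha b hb => ?_
    obtain ⟨ha, hadj⟩ := Finset.mem_filter.mp ha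
    obtain ⟨hb, hbdj⟩ := Finset.mem_filter.mp hb
    have hda : G.dist a ℓ = 1 := dist_eq_one_iff_adj.mpr hadj.symm
    have hdb : G.dist b ℓ = 1 := dist_eq_one_iff_adj.mpr hbdj.symm
    have hal := hparent a ha hadj
    have hbl := hparent b hb hbdj
    have hab := hal.of_dist_le hG hbl (by unfold IsAnc at hal hbl; omega)
    exact hab.eq_of_dist_le hG.connected (by unfold IsAnc at hal hbl; omega)

end Tree

section Objects

variable {V : Type} {G : SimpleGraph V} {r : V}

def objVerts : Object V → Set V
  | .inl v => {v}
  | .inr e => {y | y ∈ e}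

noncomputable def lowest (G : SimpleGraph V) (r : V) : Object V → V
  | .inl v => v
  | .inr e => if G.dist r e.out.1 ≤ G.dist r e.out.2 then e.out.2 else e.out.1

lemma ContainsObj.objVerts_subset {s : Finset V} {o : Object V} (h : ContainsObj G s o) :
    objVerts o ⊆ s := by
  cases o with
  | inl v => simpa [objVerts, ContainsObj] using h
  | inr e => exact h.2

lemma ContainsObj.of_objVerts_subset {s s' : Finset V} {o : Object V} (h : ContainsObj G s o)
    (h' : objVerts o ⊆ s') : ContainsObj G s' o := by
  cases o with
  | inl v => simpa [objVerts, ContainsObj] using h'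
  | inr e => exact ⟨h.1, h'⟩

lemma isAnc_lowest (hG : G.IsTree) {s : Finset V} {o : Object V} (ho : ContainsObj G s o)
    {y : V} (hy : y ∈ objVerts o) : IsAnc G r y (lowest G r o) := by
  cases o with
  | inl v =>
    rw [show y = v from hy]
    exact isAnc_refl v
  | inr e =>
    have he : e = s(e.out.1, e.out.2) := (Quot.out_eq e).symm
    have hadj : G.Adj e.out.1 e.out.2 := by rw [← SimpleGraph.mem_edgeSet, ← he]; exact ho.1
    have hy' : y = e.out.1 ∨ y = e.out.2 := by rw [he] at hy; exact Sym2.mem_iff.mp hy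
    simp only [lowest]
    split_ifs with hd <;> rcases hy' with rfl | rfl
    · exact hG.isAnc_of_adj hadj hd
    · exact isAnc_refl _
    · exact isAnc_refl _
    · exact hG.isAnc_of_adj hadj.symm (by omega)

lemma lowest_mem_objVerts (o : Object V) : lowest G r o ∈ objVerts o := by
  cases o with
  | inl v => rfl
  | inr e =>
    simp only [lowest]
    split_ifs
    · exact Sym2.out_snd_mem e
    · exact Sym2.out_fst_mem e

lemma ContainsObj.of_isAnc_lowest (hG : G.IsTree) {s s' : Finset V}
    (hs' : (G.induce (s' : Set V)).Connected) {o : Object V} (ho : ContainsObj G s o) {u w : V}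
    (hu : u ∈ s') (hus : ∀ y ∈ s, IsAnc G r u y) (hw : w ∈ s')
    (hlw : IsAnc G r (lowest G r o) w) : ContainsObj G s' o :=
  ho.of_objVerts_subset fun y hy => mem_of_isAnc_of_isAnc hG hs' hu hw
    (hus y (ho.objVerts_subset hy)) ((isAnc_lowest hG ho hy).trans hG.connected hlw)

theorem chainCover_of_isTree {n : ℕ} {S : Fin n → Finset V} (hG : G.IsTree)
    (hsub : ∀ j, (G.induce (S j : Set V)).Connected) {rt : Fin n → V} (hrtmem : ∀ j, rt j ∈ S j)
    (hrt : ∀ j, ∀ v ∈ S j, IsAnc G r (rt j) v) {i : Fin n}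
    (hroots : ∀ j, i ≤ j → ∀ x ∈ S i, x ∈ S j → IsAnc G r (rt j) (rt i))
    {L : Finset V} (hL : ∀ v ∈ S i, ∃ ℓ ∈ L, IsAnc G r v ℓ) :
    ChainCover G S i L (fun o ℓ => IsAnc G r (lowest G r o) ℓ) where
  exists_obj := ⟨.inl (rt i), hrtmem i⟩
  exists_above o ho := hL _ (ho.objVerts_subset (lowest_mem_objVerts o))
  nested ℓ o₁ o₂ ho₁ ho₂ hℓ₁ hℓ₂ := by
    have key : ∀ o₁ o₂, ContainsObj G (S i) o₁ → ContainsObj G (S i) o₂ →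
        IsAnc G r (lowest G r o₁) (lowest G r o₂) → usersFrom G S i o₂ ⊆ usersFrom G S i o₁ := by
      intro o₁ o₂ ho₁ ho₂ h j hj
      simp only [usersFrom, Finset.mem_filter, Finset.mem_univ, true_and] at hj ⊢
      have hw : lowest G r o₂ ∈ S j := hj.2.objVerts_subset (lowest_mem_objVerts o₂)
      have hwi : lowest G r o₂ ∈ S i := ho₂.objVerts_subset (lowest_mem_objVerts o₂)
      refine ⟨hj.1, ho₁.of_isAnc_lowest hG (hsub j) (hrtmem j) (fun y hy => ?_) hw h⟩
      exact (hroots j hj.1 _ hwi hw).trans hG.connected (hrt i y hy)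
    rcases hℓ₁.total hG hℓ₂ with h | h
    · exact Or.inr (key o₁ o₂ ho₁ ho₂ h)
    · exact Or.inl (key o₂ o₁ ho₂ ho₁ h)

end Objects

theorem statement10_general
    {V : Type} [Fintype V] [DecidableEq V] (G : SimpleGraph V)
    (hTree : G.IsTree) (r : V)
    {n : ℕ} (S : Fin n → Finset V)
    -- the subtrees are distinct, and each `S i` is a connected subgraph of `G`
    (hsub : ∀ i, (G.induce (S i : Set V)).Connected)
    -- `rt i` is the vertex of the subtree `S i` closest to the root `r`
    (rt : Fin n → V) (hrtmem : ∀ i, rt i ∈ S i)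
    (hrtmin : ∀ i, ∀ v ∈ S i, G.dist r (rt i) ≤ G.dist r v)
    -- `pos` is a post-order (bottom-up) traversal of the tree ...
    (pos : V → ℕ) (hposinj : Function.Injective pos)
    (hpost : ∀ u v : V, IsAnc G r v u → pos u ≤ pos v)
    -- ... along which the roots of the subtrees appear in nondecreasing order
    (hord : ∀ i j : Fin n, i ≤ j → pos (rt i) ≤ pos (rt j))
    (k : Object V → ℕ)
    (d : Fin n → ℕ)
    -- every subtree has at least one leaf other than its root, and `M` bounds these numbers
    (M : ℕ) (hM1 : ∀ i, 1 ≤ leavesCnt G (S i) (rt i))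
    (hM : ∀ i, leavesCnt G (S i) (rt i) ≤ M) :
    FeasibleM G S k d (greedyM G S k d n) ∧
    ∀ m : Fin n → ℕ, FeasibleM G S k d m →
      ∑ i, m i ≤ M * ∑ i, greedyM G S k d n i := by
  have hroot : ∀ i, ∀ v ∈ S i, IsAnc G r (rt i) v := fun i _ hv =>
    isAnc_of_mem hTree (hsub i) (hrtmem i) (hrtmin i) hv
  refine ⟨feasibleM_greedyM, fun m hm => sum_le_mul_sum_greedyM_of_chainCover (fun i => ?_) hm⟩
  obtain ⟨z, hz⟩ := Finset.card_pos.mp (hM1 i)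
  obtain ⟨hz, hzrt, -⟩ := Finset.mem_filter.mp hz
  refine ⟨_, _, chainCover_of_isTree hTree hsub hrtmem hroot (fun j hij x hxi hxj => ?_)
    (fun v hv => exists_leaf_isAnc hTree (hsub i) (hrtmem i) (hrtmin i) ⟨z, hz, hzrt⟩ hv), hM i⟩
  exact (hroot j x hxj).of_pos_le hTree hposinj hpost (hroot i x hxi) (hord i j hij)

/-- **Theorem (M-approximation for the demand version).** The multiset `A` output by
the modified greedy algorithm is feasible, and every feasible multiset `m` satisfies
`|m| ≤ M · |A|`, cardinalities being counted with multiplicities. -/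
theorem statement10
    {V : Type} [Fintype V] [DecidableEq V] (G : SimpleGraph V)
    (hTree : G.IsTree) (r : V)
    {n : ℕ} (S : Fin n → Finset V)
    -- the subtrees are distinct, and each `S i` is a connected subgraph of `G`
    (hdistinct : Function.Injective S)
    (hsub : ∀ i, (G.induce (S i : Set V)).Connected)
    -- `rt i` is the vertex of the subtree `S i` closest to the root `r`
    (rt : Fin n → V) (hrtmem : ∀ i, rt i ∈ S i)
    (hrtmin : ∀ i, ∀ v ∈ S i, G.dist r (rt i) ≤ G.dist r v)
    -- `pos` is a post-order (bottom-up) traversal of the tree ...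
    (pos : V → ℕ) (hposinj : Function.Injective pos)
    (hpost : ∀ u v : V, IsAnc G r v u → pos u ≤ pos v)
    (hcontig : ∀ u x v : V, IsAnc G r v u → pos u ≤ pos x → pos x ≤ pos v → IsAnc G r v x)
    -- ... along which the roots of the subtrees appear in nondecreasing order
    (hord : ∀ i j : Fin n, i ≤ j → pos (rt i) ≤ pos (rt j))
    (k : Object V → ℕ)
    -- demands are positive
    (d : Fin n → ℕ) (hd : ∀ i, 1 ≤ d i)
    -- every subtree has at least one leaf other than its root, and `M` bounds these numbers
    (M : ℕ) (hM1 : ∀ i, 1 ≤ leavesCnt G (S i) (rt i))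
    (hM : ∀ i, leavesCnt G (S i) (rt i) ≤ M) :
    FeasibleM G S k d (greedyM G S k d n) ∧
    ∀ m : Fin n → ℕ, FeasibleM G S k d m →
      ∑ i, m i ≤ M * ∑ i, greedyM G S k d n i :=
  statement10_general G hTree r S hsub rt hrtmem hrtmin pos hposinj hpost hord k d M hM1 hM
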